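/- arXiv:2109.02361 — 2 statements merged into one kernel-verified Lean document; each statement's English description precedes it below -/
import Mathlib

section
/- In a finite-dimensional irreducible representation V of X(osp_{1|2n}), a highest vector (a nonzero vector ξ with t_{ij}(u)ξ = 0 for all 1 ≤ i < j ≤ 2n+1 and t_{ii}(u)ξ = λ_i(u)ξ for some scalar series λ_i(u)) is determined uniquely up to a constant factor. -/
/-!
Common definitions for the Yangian `X(osp_{1|2n})` associated with the orthosymplectic
Lie superalgebra `osp(1|2n)`, following Molev, "Representations of the Yangians
associated with Lie superalgebras osp(1|2n)".

Indices are 0-based: the index set {1,…,2n+1} of the paper corresponds to `Fin (2n+1)`,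
the involution i ↦ i′ = 2n−i+2 corresponds to `pr : i ↦ 2n−i`, the parity ī is 1 unless
i is the middle index `n`, and τ_i = 1 for i ≤ n and −1 for i > n.

The extended Yangian is presented by the coefficients `t_{ij}^{(r)}` (`r ≥ 1`) of the series
`t_{ij}(u) = δ_{ij} + Σ_{r≥1} t_{ij}^{(r)} u^{−r}`, subject to the defining RTT relations,
written in the equivalent explicit component form (formula (2.9) of the paper), with
denominators cleared.  Working with the variables `x = u⁻¹` and `y = v⁻¹`, so that
`u − v = (y−x)/(xy)` and `u − v − κ = (y − x − κxy)/(xy)`, the relation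
`[t_{ij}(u), t_{kl}(v)] = (u−v)⁻¹ (⋯) − (u−v−κ)⁻¹ (⋯)` becomes the power series identity
`relL = relR` below, and the Yangian is the quotient of the free algebra by the
coefficient-wise relations.
-/

noncomputable section

namespace OspYangian

open Finset

/-- The size of the index set: `2n+1`. -/
abbrev NN (n : ℕ) : ℕ := 2 * n + 1

/-- Convenient constructor for indices. -/
def idx {n : ℕ} (i : ℕ) (h : i < 2 * n + 1) : Fin (NN n) := ⟨i, h⟩

/-- The involution `i ↦ i′` (0-based: `i ↦ 2n − i`). -/
def pr {n : ℕ} (i : Fin (NN n)) : Fin (NN n) := idx (2 * n - (i : ℕ)) (by omega)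

/-- The parity `ī`: `0` for the (even) middle index, `1` for the (odd) remaining ones. -/
def pb {n : ℕ} (i : Fin (NN n)) : ℕ := if (i : ℕ) = n then 0 else 1

/-- The sign `τ_i`: `1` for `i ≤ n`, `−1` for `i > n` (0-based). -/
def tau {n : ℕ} (i : Fin (NN n)) : ℂ := if (i : ℕ) ≤ n then 1 else -1

/-- `κ = −n − 1/2`. -/
def kappa (n : ℕ) : ℂ := -(n : ℂ) - 1 / 2

/-- The sign `(−1)^m`. -/
def sg (m : ℕ) : ℂ := (-1 : ℂ) ^ m

section GenericSeries

variable {I : Type*} {A : Type*} [Ring A] [Algebra ℂ A]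

/-- Given a family `t i j : ℕ → A` of coefficients of series `t_{ij}(u) = Σ_r t_{ij}^{(r)} u^{−r}`,
the series `t_{ij}(u)` as an element of `A⟦x⟧⟦y⟧` (constant in `y`), where `x = u⁻¹`. -/
def Tx (t : I → I → ℕ → A) (i j : I) : PowerSeries (PowerSeries A) :=
  PowerSeries.C (PowerSeries.mk (t i j))

/-- The series `t_{ij}(v)` as an element of `A⟦x⟧⟦y⟧` (constant in `x`), where `y = v⁻¹`. -/
def Ty (t : I → I → ℕ → A) (i j : I) : PowerSeries (PowerSeries A) :=
  PowerSeries.mk fun r => PowerSeries.C (t i j r)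

/-- The element `x = u⁻¹` of `A⟦x⟧⟦y⟧`. -/
def Xv (A : Type*) [Ring A] : PowerSeries (PowerSeries A) :=
  PowerSeries.C PowerSeries.X

/-- The element `y = v⁻¹` of `A⟦x⟧⟦y⟧`. -/
def Yv (A : Type*) [Ring A] : PowerSeries (PowerSeries A) := PowerSeries.X

end GenericSeries

section RTT

variable {A : Type*} [Ring A] [Algebra ℂ A]

/-- Left-hand side of the defining relation of `X(osp_{1|2n})` for a family `t` of series
coefficients: `(u−v)(u−v−κ)·[t_{ij}(u), t_{kl}(v)]` (super-commutator), multiplied by `(xy)²`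
to clear denominators; here `x = u⁻¹`, `y = v⁻¹`. -/
def relL (n : ℕ) (t : Fin (NN n) → Fin (NN n) → ℕ → A) (i j k l : Fin (NN n)) :
    PowerSeries (PowerSeries A) :=
  (Yv A - Xv A) * (Yv A - Xv A - kappa n • (Xv A * Yv A)) *
    (Tx t i j * Ty t k l - sg ((pb i + pb j) * (pb k + pb l)) • (Ty t k l * Tx t i j))

/-- Right-hand side of the defining relation of `X(osp_{1|2n})`:
`(u−v−κ)·A − (u−v)·B` multiplied by `(xy)²`, where
`A = (−1)^{īj̄+īk̄+j̄k̄} (t_{kj}(u)t_{il}(v) − t_{kj}(v)t_{il}(u))` and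
`B = δ_{k i′} Σ_p (−1)^{ī+īj̄+j̄p̄} τ_iτ_p t_{pj}(u)t_{p′l}(v)
   − δ_{l j′} Σ_p (−1)^{j̄+p̄+īk̄+j̄k̄+īp̄} τ_jτ_p t_{kp′}(v)t_{ip}(u)`. -/
def relR (n : ℕ) (t : Fin (NN n) → Fin (NN n) → ℕ → A) (i j k l : Fin (NN n)) :
    PowerSeries (PowerSeries A) :=
  (Xv A * Yv A) * (Yv A - Xv A - kappa n • (Xv A * Yv A)) *
    (sg (pb i * pb j + pb i * pb k + pb j * pb k) •
      (Tx t k j * Ty t i l - Ty t k j * Tx t i l))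
  - (Xv A * Yv A) * (Yv A - Xv A) *
    ((if k = pr i then
        ∑ p : Fin (NN n), (sg (pb i + pb i * pb j + pb j * pb p) * tau i * tau p) •
          (Tx t p j * Ty t (pr p) l)
      else 0)
     - (if l = pr j then
        ∑ p : Fin (NN n), (sg (pb j + pb p + pb i * pb k + pb j * pb k + pb i * pb p)
            * tau j * tau p) • (Ty t k (pr p) * Tx t i p)
      else 0))

/-- A family of matrix elements `t i j : ℕ → A` (the coefficients of series `t_{ij}(u)`)
satisfies the defining `RTT`-relation of `X(osp_{1|2n})`. -/
def SatisfiesRTT (n : ℕ) (t : Fin (NN n) → Fin (NN n) → ℕ → A) : Prop :=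
  ∀ i j k l : Fin (NN n), relL n t i j k l = relR n t i j k l

end RTT

/-- The free algebra on the generators `t_{ij}^{(r)}`, `r ≥ 1` (the last component `r : ℕ`
encodes the generator `t_{ij}^{(r+1)}`). -/
abbrev FA (n : ℕ) := FreeAlgebra ℂ (Fin (NN n) × Fin (NN n) × ℕ)

/-- The coefficients of the generating series `t_{ij}(u)` in the free algebra:
`t_{ij}^{(0)} = δ_{ij}` and `t_{ij}^{(r)}` is a free generator for `r ≥ 1`. -/
def fgen (n : ℕ) : Fin (NN n) → Fin (NN n) → ℕ → FA n := fun i j r =>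
  if r = 0 then (if i = j then 1 else 0) else FreeAlgebra.ι ℂ (i, j, r - 1)

/-- The defining relations of the extended Yangian: all coefficients of `relL` are identified
with the corresponding coefficients of `relR`. -/
def yrel (n : ℕ) : FA n → FA n → Prop := fun a b =>
  ∃ (i j k l : Fin (NN n)) (r s : ℕ),
    a = PowerSeries.coeff s
          (PowerSeries.coeff r (relL n (fgen n) i j k l)) ∧
    b = PowerSeries.coeff s
          (PowerSeries.coeff r (relR n (fgen n) i j k l))

/-- The extended Yangian `X(osp_{1|2n})`. -/
abbrev XX (n : ℕ) := RingQuot (yrel n)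

/-- The coefficient `t_{ij}^{(r)}` of the series `t_{ij}(u) = Σ_{r≥0} t_{ij}^{(r)} u^{−r}`
in the extended Yangian (`TT n i j 0 = δ_{ij}`). -/
def TT (n : ℕ) (i j : Fin (NN n)) (r : ℕ) : XX n :=
  RingQuot.mkAlgHom ℂ (yrel n) (fgen n i j r)

section Shift

variable {M : Type*} [AddCommMonoid M] [Module ℂ M]

/-- The coefficient of `u^{−s}` in `f(u+a)`, where `f(u) = Σ_r c r · u^{−r}`:
`Σ_{r≤s} (−1)^{s−r} C(s−1, s−r) a^{s−r} · c r`. -/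
def shiftCoeff (a : ℂ) (c : ℕ → M) (s : ℕ) : M :=
  ∑ r ∈ Finset.range (s + 1),
    ((-1 : ℂ) ^ (s - r) * (Nat.choose (s - 1) (s - r) : ℂ) * a ^ (s - r)) • c r

/-- For a power series `f` in `u⁻¹`, the power series of `f(u+a)` in `u⁻¹`. -/
def shiftSeries (a : ℂ) (f : PowerSeries ℂ) : PowerSeries ℂ :=
  PowerSeries.mk fun s => shiftCoeff a (fun r => PowerSeries.coeff r f) s

end Shift

/-- The consistency conditions (3.4) of the paper:
`λ_i(u) λ_{i′}(u+n−i+1/2) = λ_{i+1}(u) λ_{(i+1)′}(u+n−i+1/2)` for `i = 1,…,n`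
(0-based: positions `i` and `i+1` with `i < n`, shift `n − i − 1/2`). -/
def Consistent (n : ℕ) (lam : Fin (NN n) → PowerSeries ℂ) : Prop :=
  ∀ (i : ℕ) (h : i < n),
    lam (idx i (by omega)) *
        shiftSeries ((n : ℂ) - (i : ℂ) - 1 / 2) (lam (pr (idx i (by omega)))) =
      lam (idx (i + 1) (by omega)) *
        shiftSeries ((n : ℂ) - (i : ℂ) - 1 / 2) (lam (pr (idx (i + 1) (by omega))))

/-- `V` is a highest weight module over `X(osp_{1|2n})` with highest vector `xi` and
highest weight `lam` (a tuple of series in `1 + u⁻¹ℂ[[u⁻¹]]`): `xi` is nonzero, generates `V`,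
is annihilated by all `t_{ij}(u)` with `i < j` and is an eigenvector of all `t_{ii}(u)`
with eigenvalue the series `λ_i(u)`. -/
def IsHighestWeight (n : ℕ) {V : Type*} [AddCommGroup V] [Module ℂ V] [Module (XX n) V]
    (xi : V) (lam : Fin (NN n) → PowerSeries ℂ) : Prop :=
  xi ≠ 0 ∧ Submodule.span (XX n) {xi} = ⊤ ∧
  (∀ i j : Fin (NN n), i < j → ∀ r : ℕ, TT n i j r • xi = 0) ∧
  (∀ (i : Fin (NN n)) (r : ℕ), TT n i i r • xi = (PowerSeries.coeff r (lam i)) • xi) ∧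
  (∀ i : Fin (NN n), PowerSeries.constantCoeff (lam i) = 1)

/-- The generators of the left ideal defining the Verma module `M(λ(u))`: all coefficients
`t_{ij}^{(r)}`, `r ≥ 1`, with `i < j`, and all `t_{ii}^{(r)} − λ_i^{(r)}`, `r ≥ 1`. -/
def vermaGens (n : ℕ) (lam : Fin (NN n) → PowerSeries ℂ) : Set (XX n) :=
  {x | (∃ (i j : Fin (NN n)) (r : ℕ), i < j ∧ x = TT n i j (r + 1)) ∨
       (∃ (i : Fin (NN n)) (r : ℕ),
         x = TT n i i (r + 1) - algebraMap ℂ (XX n) (PowerSeries.coeff (r + 1) (lam i)))}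

/-- The left ideal defining the Verma module `M(λ(u))`. -/
def vermaIdeal (n : ℕ) (lam : Fin (NN n) → PowerSeries ℂ) : Submodule (XX n) (XX n) :=
  Submodule.span (XX n) (vermaGens n lam)

/-- The Verma module `M(λ(u))`. -/
abbrev Verma (n : ℕ) (lam : Fin (NN n) → PowerSeries ℂ) :=
  XX n ⧸ vermaIdeal n lam

/-- The sum of all proper submodules of the Verma module `M(λ(u))` (its unique maximal
proper submodule). -/
def vermaRad (n : ℕ) (lam : Fin (NN n) → PowerSeries ℂ) : Submodule (XX n) (Verma n lam) :=
  sSup {W : Submodule (XX n) (Verma n lam) | W ≠ ⊤}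

/-- The irreducible quotient `L(λ(u))` of the Verma module `M(λ(u))`. -/
abbrev Lmod (n : ℕ) (lam : Fin (NN n) → PowerSeries ℂ) :=
  Verma n lam ⧸ vermaRad n lam

/-- The Drinfeld polynomial condition `λ₊(u)/λ₋(u) = P(u+1)/P(u)` for a pair of series
`λ₋(u), λ₊(u) ∈ 1 + u⁻¹ℂ[[u⁻¹]]` and a polynomial `P`, i.e. the equality of series
`λ₊(u)·u^{−deg P}·P(u) = λ₋(u)·u^{−deg P}·P(u+1)`; here `u^{−deg P}·P(u)` is the reversed
polynomial `P.reverse` regarded as a power series in `u⁻¹`. -/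
def DrinfeldPair (lamLow lamHigh : PowerSeries ℂ) (P : Polynomial ℂ) : Prop :=
  lamHigh * ((P.reverse : Polynomial ℂ) : PowerSeries ℂ) =
    lamLow * (((P.comp (Polynomial.X + 1)).reverse : Polynomial ℂ) : PowerSeries ℂ)

end OspYangian
namespace OspYangian

open Finset

section ModuleLemmas

variable {n : ℕ} {V : Type*} [AddCommGroup V] [Module ℂ V] [Module (XX n) V]
  [IsScalarTower ℂ (XX n) V]

theorem smul_comm_alg (c : ℂ) (x : XX n) (v : V) : x • (c • v) = c • (x • v) := by
  rw [← algebraMap_smul (XX n) c v, ← mul_smul, ← Algebra.commutes, mul_smul,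
    algebraMap_smul]

end ModuleLemmas

section Vplus

variable (n : ℕ) (V : Type*) [AddCommGroup V] [Module ℂ V] [Module (XX n) V]
  [IsScalarTower ℂ (XX n) V]

/-- The subspace `V⁺ = {η ∈ V | t_{1j}(u)η = 0 (j > 1), t_{i1′}(u)η = 0 (i < 1′)}`
(0-based: first index `0`, last index `2n`). -/
def Vplus : Set V :=
  {η | (∀ j : Fin (NN n), 0 < (j : ℕ) → ∀ r : ℕ, TT n (idx 0 (by omega)) j r • η = 0) ∧
       (∀ i : Fin (NN n), (i : ℕ) < 2 * n → ∀ r : ℕ, TT n i (idx (2 * n) (by omega)) r • η = 0)}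

/-- `V⁺` as a `ℂ`-subspace of `V`. -/
def VplusSub : Submodule ℂ V where
  carrier := Vplus n V
  zero_mem' := ⟨fun _ _ _ => smul_zero _, fun _ _ _ => smul_zero _⟩
  add_mem' := by
    rintro a b ⟨h1, h2⟩ ⟨g1, g2⟩
    exact ⟨fun j hj r => by rw [smul_add, h1 j hj r, g1 j hj r, add_zero],
           fun i hi r => by rw [smul_add, h2 i hi r, g2 i hi r, add_zero]⟩
  smul_mem' := by
    rintro c x ⟨h1, h2⟩
    exact ⟨fun j hj r => by rw [smul_comm_alg, h1 j hj r, smul_zero],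
           fun i hi r => by rw [smul_comm_alg, h2 i hi r, smul_zero]⟩

/-- The subspace `V⁰ = {η ∈ V | t_{ij}(u)η = 0 for all i < j}`. -/
def Vzero : Set V :=
  {η | ∀ i j : Fin (NN n), i < j → ∀ r : ℕ, TT n i j r • η = 0}

end Vplus

/-- The embedding of index sets `{1,…,2n+1} ↪ {1,…,2(n+1)+1}`, `i ↦ i+1`, used in the
reduction from `X(osp_{1|2(n+1)})` to `X(osp_{1|2n})`. -/
def emb {m : ℕ} (i : Fin (NN m)) : Fin (NN (m + 1)) :=
  idx ((i : ℕ) + 1) (by have h : (i : ℕ) < 2 * m + 1 := i.isLt; omega)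

section Yangian

/-- `φ` is the automorphism `t_{ij}(u) ↦ f(u) t_{ij}(u)` of `X(osp_{1|2n})`
for the series `f(u) = Σ_s f_s u^{−s}` with `f_0 = 1`. -/
def IsMultAut (n : ℕ) (f : ℕ → ℂ) (φ : XX n →ₐ[ℂ] XX n) : Prop :=
  f 0 = 1 ∧ ∀ (i j : Fin (NN n)) (r : ℕ),
    φ (TT n i j r) = ∑ s ∈ Finset.range (r + 1), f s • TT n i j (r - s)

/-- The Yangian `Y(osp_{1|2n})`: the subalgebra of `X(osp_{1|2n})` of elements stable under
all the automorphisms `t_{ij}(u) ↦ f(u) t_{ij}(u)`. -/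
def Ysub (n : ℕ) : Subalgebra ℂ (XX n) where
  carrier := {z | ∀ (f : ℕ → ℂ) (φ : XX n →ₐ[ℂ] XX n), IsMultAut n f φ → φ z = z}
  mul_mem' := by
    intro a b ha hb f φ hφ
    rw [map_mul, ha f φ hφ, hb f φ hφ]
  one_mem' := by
    intro f φ hφ
    exact map_one φ
  add_mem' := by
    intro a b ha hb f φ hφ
    rw [map_add, ha f φ hφ, hb f φ hφ]
  zero_mem' := by
    intro f φ hφ
    exact map_zero φ
  algebraMap_mem' := by
    intro c f φ hφ
    exact φ.commutes c

/-- A finite-dimensional irreducible representation of the Yangian `Y(osp_{1|2n})`. -/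
structure FDRep (n : ℕ) where
  carrier : Type
  [ab : AddCommGroup carrier]
  [mc : Module ℂ carrier]
  [my : Module (Ysub n) carrier]
  [tw : IsScalarTower ℂ (Ysub n) carrier]
  fd : FiniteDimensional ℂ carrier
  simple : IsSimpleModule (Ysub n) carrier

attribute [instance] FDRep.ab FDRep.mc FDRep.my FDRep.tw

/-- Isomorphism of representations of `Y(osp_{1|2n})`. -/
def fdrepSetoid (n : ℕ) : Setoid (FDRep n) where
  r V W := Nonempty (V.carrier ≃ₗ[Ysub n] W.carrier)
  iseqv := ⟨fun _ => ⟨LinearEquiv.refl _ _⟩,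
    fun ⟨e⟩ => ⟨e.symm⟩, fun ⟨e⟩ ⟨f⟩ => ⟨e.trans f⟩⟩

end Yangian

end OspYangian
namespace OspYangian

open Finset

section VectorRep

variable (n : ℕ)

/-- The coefficient at `u^{−r}` of the image of `t_{ij}(u)` under the vector representation
`t_{ij}(u) ↦ δ_{ij} + u⁻¹ e_{ij} (−1)^{ī} − (u+κ)⁻¹ e_{j′i′} (−1)^{īj̄} τ_i τ_j`
of `X(osp_{1|2n})` on `ℂ^{1|2n}`, as a matrix. -/
def vecMat (i j : Fin (NN n)) (r : ℕ) : Matrix (Fin (NN n)) (Fin (NN n)) ℂ :=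
  if r = 0 then (if i = j then 1 else 0)
  else (if r = 1 then (sg (pb i)) • Matrix.single i j (1 : ℂ) else 0)
    - ((-(kappa n)) ^ (r - 1) * sg (pb i * pb j) * tau i * tau j) •
        Matrix.single (pr j) (pr i) (1 : ℂ)

/-- The entry at `(a,b)` of the matrix of `t_{ij}(u)` in the vector representation,
as a function of a complex number `u`. -/
def vrepE (u : ℂ) (i j a b : Fin (NN n)) : ℂ :=
  (if i = j ∧ a = b then 1 else 0)
  + u⁻¹ * sg (pb i) * (if a = i ∧ b = j then 1 else 0)
  - (u + kappa n)⁻¹ * sg (pb i * pb j) * tau i * tau j *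
      (if a = pr j ∧ b = pr i then 1 else 0)

/-- The entry at `(a,b)` of the coefficient at `u^{−s}` of the matrix of `t_{ij}(u−m)` in the
vector representation, using `(u−m)⁻¹ = Σ_{s≥1} m^{s−1} u^{−s}` and
`(u−m+κ)⁻¹ = Σ_{s≥1} (m−κ)^{s−1} u^{−s}`. -/
def vrepCE (m : ℂ) (s : ℕ) (i j a b : Fin (NN n)) : ℂ :=
  if s = 0 then (if i = j ∧ a = b then 1 else 0)
  else m ^ (s - 1) * sg (pb i) * (if a = i ∧ b = j then 1 else 0)
    - (m - kappa n) ^ (s - 1) * sg (pb i * pb j) * tau i * tau j *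
        (if a = pr j ∧ b = pr i then 1 else 0)

variable (k : ℕ)

/-- The `k`-fold tensor power `(ℂ^{1|2n})^{⊗k}`, realized as functions on multi-indices. -/
abbrev Wk := (Fin k → Fin (NN n)) → ℂ

/-- The Koszul sign arising when the elementary tensor operator
`t_{a_0 a_1} ⊗ t_{a_1 a_2} ⊗ ⋯ ⊗ t_{a_{k−1} a_k}` (each factor of parity
`p(a_{p−1}) + p(a_p)`) is applied to the basis vector `e_{d_1} ⊗ ⋯ ⊗ e_{d_k}`:
`(−1)^{Σ_p (p(a_{p−1})+p(a_p))·(p(d_1)+⋯+p(d_{p−1}))}`. -/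
def kosz (a : Fin (k + 1) → Fin (NN n)) (d : Fin k → Fin (NN n)) : ℂ :=
  sg (∑ p : Fin k, (pb (a p.castSucc) + pb (a p.succ)) *
    (∑ q : Fin k, if (q : ℕ) < (p : ℕ) then pb (d q) else 0))

/-- The matrix of the operator
`T_{ij}(u) = Σ_{a_1,…,a_{k−1}} t_{i a_1}(u) ⊗ t_{a_1 a_2}(u−1) ⊗ ⋯ ⊗ t_{a_{k−1} j}(u−k+1)`
on `(ℂ^{1|2n})^{⊗k}`, each tensor factor acting through the vector representation and the
tensor products taken with the super sign convention. -/
def TopMat (u : ℂ) (i j : Fin (NN n)) :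
    Matrix (Fin k → Fin (NN n)) (Fin k → Fin (NN n)) ℂ := fun c d =>
  ∑ a : Fin (k + 1) → Fin (NN n),
    if a 0 = i ∧ a (Fin.last k) = j then
      kosz n k a d *
        ∏ p : Fin k, vrepE n (u - ((p : ℕ) : ℂ)) (a p.castSucc) (a p.succ) (c p) (d p)
    else 0

/-- The matrix of the coefficient at `u^{−r}` of the operator `T_{ij}(u)` on
`(ℂ^{1|2n})^{⊗k}` (sum over compositions `r = r_1 + ⋯ + r_k` of products of coefficients of
the shifted vector representations). -/
def TopCMat (r : ℕ) (i j : Fin (NN n)) :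
    Matrix (Fin k → Fin (NN n)) (Fin k → Fin (NN n)) ℂ := fun c d =>
  ∑ a : Fin (k + 1) → Fin (NN n),
    if a 0 = i ∧ a (Fin.last k) = j then
      kosz n k a d *
        ∑ rr ∈ Finset.Nat.antidiagonalTuple k r,
          ∏ p : Fin k, vrepCE n ((p : ℕ) : ℂ) (rr p) (a p.castSucc) (a p.succ) (c p) (d p)
    else 0

/-- The antisymmetric vector `ξ_k = Σ_{σ ∈ S_k} sgn(σ) e_{σ(1)} ⊗ ⋯ ⊗ e_{σ(k)}`. -/
def xiVec (hk : k ≤ NN n) : Wk n k := fun c =>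
  ∑ σ : Equiv.Perm (Fin k),
    ((Equiv.Perm.sign σ : ℤ) : ℂ) * (if c = fun p => Fin.castLE hk (σ p) then 1 else 0)

end VectorRep

section SuperTranspose

variable (n : ℕ)

/-- The super-transposition `t : End ℂ^{1|2n} → End ℂ^{1|2n}`, the linear extension of
`e_{ij} ↦ e_{j′i′} (−1)^{īj̄+ī} τ_i τ_j`. -/
def stpM (A : Matrix (Fin (NN n)) (Fin (NN n)) ℂ) : Matrix (Fin (NN n)) (Fin (NN n)) ℂ :=
  ∑ i : Fin (NN n), ∑ j : Fin (NN n),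
    (A i j * sg (pb i * pb j + pb i) * tau i * tau j) •
      Matrix.single (pr j) (pr i) (1 : ℂ)

/-- `End(ℂ^{1|2n}) ⊗ End(ℂ^{1|2n})` realized as operators on `ℂ^{1|2n} ⊗ ℂ^{1|2n}`. -/
abbrev MatP := Matrix (Fin (NN n) × Fin (NN n)) (Fin (NN n) × Fin (NN n)) ℂ

/-- The elementary tensor `e_{ij} ⊗ e_{kl}` as an operator on `ℂ^{1|2n} ⊗ ℂ^{1|2n}`,
with the Koszul sign convention `(a ⊗ b)(v ⊗ w) = (−1)^{|b||v|} av ⊗ bw`. -/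
def elemT2 (i j k l : Fin (NN n)) : MatP n := fun x y =>
  if x = (i, k) ∧ y = (j, l) then sg ((pb k + pb l) * pb j) else 0

/-- The operator `P = Σ_{i,j} e_{ij} ⊗ e_{ji} (−1)^{j̄}`. -/
def Pmat : MatP n := ∑ i : Fin (NN n), ∑ j : Fin (NN n), sg (pb j) • elemT2 n i j j i

/-- The operator `Q = Σ_{i,j} e_{ij} ⊗ e_{i′j′} (−1)^{īj̄} τ_i τ_j`. -/
def Qmat : MatP n := ∑ i : Fin (NN n), ∑ j : Fin (NN n),
  (sg (pb i * pb j) * tau i * tau j) • elemT2 n i j (pr i) (pr j)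

/-- The super-transposition applied to the first tensor factor of
`End(ℂ^{1|2n}) ⊗ End(ℂ^{1|2n})`: extract the coefficients of `M` on elementary tensors
`e_{ij} ⊗ e_{kl}` and apply `t(e_{ij}) = e_{j′i′}(−1)^{īj̄+ī}τ_iτ_j`. -/
def stp1 (M : MatP n) : MatP n :=
  ∑ i : Fin (NN n), ∑ j : Fin (NN n), ∑ k : Fin (NN n), ∑ l : Fin (NN n),
    (M (i, k) (j, l) * sg ((pb k + pb l) * pb j) * sg (pb i * pb j + pb i) * tau i * tau j) •
      elemT2 n (pr j) (pr i) k l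

/-- The super-transposition applied to the second tensor factor. -/
def stp2 (M : MatP n) : MatP n :=
  ∑ i : Fin (NN n), ∑ j : Fin (NN n), ∑ k : Fin (NN n), ∑ l : Fin (NN n),
    (M (i, k) (j, l) * sg ((pb k + pb l) * pb j) * sg (pb k * pb l + pb k) * tau k * tau l) •
      elemT2 n i j (pr l) (pr k)

/-- `End(ℂ^{1|2n})^{⊗3}` realized as operators on `(ℂ^{1|2n})^{⊗3}`. -/
abbrev Mat3 := Matrix (Fin (NN n) × Fin (NN n) × Fin (NN n))
  (Fin (NN n) × Fin (NN n) × Fin (NN n)) ℂ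

/-- The elementary tensor `e_{ij} ⊗ e_{kl} ⊗ e_{mp}` as an operator on `(ℂ^{1|2n})^{⊗3}`
with the Koszul sign convention. -/
def elemT3 (i j k l m p : Fin (NN n)) : Mat3 n := fun x y =>
  if x = (i, k, m) ∧ y = (j, l, p) then
    sg ((pb k + pb l) * pb j + (pb m + pb p) * (pb j + pb l))
  else 0

/-- `P` placed in the tensor factors 1 and 2 of `End(ℂ^{1|2n})^{⊗3}`. -/
def P12 : Mat3 n := ∑ i : Fin (NN n), ∑ j : Fin (NN n), ∑ m : Fin (NN n),
  sg (pb j) • elemT3 n i j j i m m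

/-- `P` placed in the tensor factors 1 and 3. -/
def P13 : Mat3 n := ∑ i : Fin (NN n), ∑ j : Fin (NN n), ∑ m : Fin (NN n),
  sg (pb j) • elemT3 n i j m m j i

/-- `P` placed in the tensor factors 2 and 3. -/
def P23 : Mat3 n := ∑ i : Fin (NN n), ∑ j : Fin (NN n), ∑ m : Fin (NN n),
  sg (pb j) • elemT3 n m m i j j i

/-- `Q` placed in the tensor factors 1 and 2. -/
def Q12 : Mat3 n := ∑ i : Fin (NN n), ∑ j : Fin (NN n), ∑ m : Fin (NN n),
  (sg (pb i * pb j) * tau i * tau j) • elemT3 n i j (pr i) (pr j) m m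

/-- `Q` placed in the tensor factors 1 and 3. -/
def Q13 : Mat3 n := ∑ i : Fin (NN n), ∑ j : Fin (NN n), ∑ m : Fin (NN n),
  (sg (pb i * pb j) * tau i * tau j) • elemT3 n i j m m (pr i) (pr j)

/-- `Q` placed in the tensor factors 2 and 3. -/
def Q23 : Mat3 n := ∑ i : Fin (NN n), ∑ j : Fin (NN n), ∑ m : Fin (NN n),
  (sg (pb i * pb j) * tau i * tau j) • elemT3 n m m i j (pr i) (pr j)

/-- The `R`-matrix `R(w) = 1 − P/w + Q/(w−κ)` with `P`, `Q` placed in a given pair of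
tensor factors. -/
def Rmat3 (Pm Qm : Mat3 n) (w : ℂ) : Mat3 n :=
  1 - w⁻¹ • Pm + (w - kappa n)⁻¹ • Qm

end SuperTranspose

section glYangian

/-- The free algebra on the generators `t°_{ij}^{(r)}`, `r ≥ 1`, of the Yangian `Y(gl_N)`. -/
abbrev FGl (N : ℕ) := FreeAlgebra ℂ (Fin N × Fin N × ℕ)

/-- The coefficients of the generating series `t°_{ij}(u)` of `Y(gl_N)` in the free algebra. -/
def glgen (N : ℕ) : Fin N → Fin N → ℕ → FGl N := fun i j r =>
  if r = 0 then (if i = j then 1 else 0) else FreeAlgebra.ι ℂ (i, j, r - 1)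

/-- Left-hand side of the defining relation of `Y(gl_N)`:
`(u−v)[t°_{ij}(u), t°_{kl}(v)]` multiplied by `xy` (`x = u⁻¹`, `y = v⁻¹`). -/
def relLgl (N : ℕ) (t : Fin N → Fin N → ℕ → FGl N) (i j k l : Fin N) :
    PowerSeries (PowerSeries (FGl N)) :=
  (Yv (FGl N) - Xv (FGl N)) * (Tx t i j * Ty t k l - Ty t k l * Tx t i j)

/-- Right-hand side of the defining relation of `Y(gl_N)`:
`t°_{kj}(u)t°_{il}(v) − t°_{kj}(v)t°_{il}(u)` multiplied by `xy`. -/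
def relRgl (N : ℕ) (t : Fin N → Fin N → ℕ → FGl N) (i j k l : Fin N) :
    PowerSeries (PowerSeries (FGl N)) :=
  (Xv (FGl N) * Yv (FGl N)) * (Tx t k j * Ty t i l - Ty t k j * Tx t i l)

/-- The defining relations of `Y(gl_N)`. -/
def glrel (N : ℕ) : FGl N → FGl N → Prop := fun a b =>
  ∃ (i j k l : Fin N) (r s : ℕ),
    a = PowerSeries.coeff s
          (PowerSeries.coeff r (relLgl N (glgen N) i j k l)) ∧
    b = PowerSeries.coeff s
          (PowerSeries.coeff r (relRgl N (glgen N) i j k l))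

/-- The Yangian `Y(gl_N)`. -/
abbrev Ygl (N : ℕ) := RingQuot (glrel N)

/-- The generator `t°_{ij}^{(r)}` of `Y(gl_N)` (`TG N i j 0 = δ_{ij}`). -/
def TG (N : ℕ) (i j : Fin N) (r : ℕ) : Ygl N :=
  RingQuot.mkAlgHom ℂ (glrel N) (glgen N i j r)

/-- The embedding of index sets `{1,…,n} ↪ {1,…,2n+1}` used for `Y(gl_n) ↪ X(osp_{1|2n})`. -/
def embgl {n : ℕ} (i : Fin n) : Fin (NN n) :=
  idx (i : ℕ) (by have h : (i : ℕ) < n := i.isLt; omega)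

end glYangian

/-- `k ≤ n` implies `k ≤ 2n+1`. -/
theorem le_NN {k n : ℕ} (h : k ≤ n) : k ≤ NN n := by
  have h2 : k ≤ 2 * n + 1 := by omega
  exact h2



end OspYangian

/-!
The grading element `h = Σ_k (k − n)/2 · t_{kk}^{(1)}` satisfies
`[h, t_{ij}^{(r)}] = (j − i) t_{ij}^{(r)}`, so lowering generators (`j < i`) shift `h`-eigenvalues
down by positive integers, while diagonal generators act on a highest vector `ξ` by scalars.
The RTT relation writes the supercommutator `[t_{ij}^{(a)}, t_{kl}^{(r)}]` through quadratic
monomials of total degree `< a + r`; by induction on the degree, monomials in lowering and diagonal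
generators applied to `ξ` span `X(osp_{1|2n}) ξ = V`. Hence `V = ℂ ξ + Σ_{k ≥ 1} V_{Λ - k}` in terms
of `h`-eigenspaces, `Λ` being the eigenvalue of `ξ`. For two highest vectors the eigenvalues then
differ by integers of both signs, so they coincide, and the `Λ`-eigenspace of `h` is `ℂ ξ`.
-/

theorem smul_mem_of_mem_span {R A M : Type*} [CommSemiring R] [Semiring A] [Algebra R A]
    [AddCommMonoid M] [Module R M] [Module A M] [IsScalarTower R A M] {s : Set A} {z : A}
    (hz : z ∈ Submodule.span R s) {y : M} {S : Submodule R M} (h : ∀ g ∈ s, g • y ∈ S) :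
    z • y ∈ S :=
  Submodule.span_le (p := S.comap (LinearMap.id.smulRight y)).mpr h hz

section TopEigenvector

variable {K V : Type*} [Field K] [AddCommGroup V] [Module K V]

namespace Module.End

variable {f : Module.End K V}

theorem disjoint_eigenspace_iSup {μ : K} {g : ℕ → K} (hg : ∀ k, g k ≠ μ) :
    Disjoint (f.eigenspace μ) (⨆ k, f.eigenspace (g k)) := by
  rw [← iSup_range]
  exact f.eigenspaces_iSupIndep.disjoint_biSup fun ⟨k, hk⟩ => hg k hk

def belowSpan (f : Module.End K V) (ξ : V) (Λ : K) : Submodule K V :=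
  K ∙ ξ ⊔ ⨆ k : ℕ, f.eigenspace (Λ - (k + 1))

def IsTopEigenvector (f : Module.End K V) (ξ : V) (Λ : K) : Prop :=
  ξ ∈ f.eigenspace Λ ∧ f.belowSpan ξ Λ = ⊤

namespace IsTopEigenvector

variable {ξ : V} {Λ : K} (h : f.IsTopEigenvector ξ Λ)
include h

theorem exists_eq_sub_natCast {v : V} {μ : K} (hv : v ∈ f.eigenspace μ) (hv0 : v ≠ 0) :
    ∃ k : ℕ, μ = Λ - k := by
  by_contra! hμ
  have hle : ⊤ ≤ ⨆ k : ℕ, f.eigenspace (Λ - k) := by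
    refine h.2.ge.trans (sup_le ?_ (iSup_le fun k => ?_))
    · rw [Submodule.span_singleton_le_iff_mem]
      exact Submodule.mem_iSup_of_mem 0 (by simpa using h.1)
    · exact le_iSup_of_le (k + 1) (by push_cast; rfl)
  exact hv0 (Submodule.disjoint_def.mp (disjoint_eigenspace_iSup fun k => (hμ k).symm)
    v hv (hle Submodule.mem_top))

variable [CharZero K]

theorem mem_span_singleton {v : V} (hv : v ∈ f.eigenspace Λ) : v ∈ K ∙ ξ := by
  obtain ⟨y, hy, z, hz, rfl⟩ := Submodule.mem_sup.mp (h.2.ge (Submodule.mem_top (x := v)))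
  have hzΛ : z ∈ f.eigenspace Λ := by
    simpa using sub_mem hv ((Submodule.span_singleton_le_iff_mem _ _).mpr h.1 hy)
  have hz0 : z = 0 := Submodule.disjoint_def.mp
    (disjoint_eigenspace_iSup fun k => by simpa using Nat.cast_add_one_ne_zero k) z hzΛ hz
  rwa [hz0, add_zero]

theorem exists_eq_smul {ξ' : V} {μ : K} (h' : f.IsTopEigenvector ξ' μ) (hξ : ξ ≠ 0)
    (hξ' : ξ' ≠ 0) : ∃ c : K, ξ' = c • ξ := by
  obtain ⟨k, hk⟩ := h.exists_eq_sub_natCast h'.1 hξ'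
  obtain ⟨k', hk'⟩ := h'.exists_eq_sub_natCast h.1 hξ
  have hk0 : k = 0 := by
    have : ((k + k' : ℕ) : K) = 0 := by push_cast; linear_combination hk + hk'
    exact Nat.eq_zero_of_add_eq_zero_right (by exact_mod_cast this)
  rw [hk0, Nat.cast_zero, sub_zero] at hk
  obtain ⟨c, hc⟩ := Submodule.mem_span_singleton.mp (h.mem_span_singleton (hk ▸ h'.1))
  exact ⟨c, hc.symm⟩

end IsTopEigenvector

end Module.End

end TopEigenvector

namespace OspYangian

open PowerSeries

section DoubleSeries

variable {A : Type*} [Ring A]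

theorem Xv_mul (F : PowerSeries (PowerSeries A)) : Xv A * F = F * Xv A := by
  ext r : 1
  simp only [Xv, coeff_C_mul, coeff_mul_C]
  exact (commute_X _).symm.eq

theorem Yv_mul_Xv_mul (F : PowerSeries (PowerSeries A)) :
    Yv A * (Xv A * F) = Xv A * (Yv A * F) := by
  rw [← mul_assoc, ← mul_assoc, ← Xv_mul]

theorem coeff_coeff_Tx_mul_Ty {I : Type*} (t : I → I → ℕ → A) (i j k l : I) (a r : ℕ) :
    coeff a (coeff r (Tx t i j * Ty t k l)) = t i j a * t k l r := by
  simp only [Tx, Ty, coeff_C_mul, coeff_mk, coeff_mul_C]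

theorem coeff_coeff_Ty_mul_Tx {I : Type*} (t : I → I → ℕ → A) (i j k l : I) (a r : ℕ) :
    coeff a (coeff r (Ty t k l * Tx t i j)) = t k l r * t i j a := by
  simp only [Tx, Ty, coeff_mul_C, coeff_mk, coeff_C_mul]

variable [Algebra ℂ A] (κ : ℂ) (S T : PowerSeries (PowerSeries A))

theorem relLFactor_mul_eq :
    (Yv A - Xv A) * (Yv A - Xv A - κ • (Xv A * Yv A)) * S =
      Yv A * (Yv A * S) - (2 : ℂ) • (Xv A * (Yv A * S)) + Xv A * (Xv A * S)
        - κ • (Xv A * (Yv A * (Yv A * S))) + κ • (Xv A * (Xv A * (Yv A * S))) := by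
  simp only [mul_sub, sub_mul, mul_smul_comm, smul_mul_assoc, mul_assoc, Yv_mul_Xv_mul]
  module

theorem relRFactors_mul_sub_eq :
    Xv A * Yv A * (Yv A - Xv A - κ • (Xv A * Yv A)) * S - Xv A * Yv A * (Yv A - Xv A) * T =
      Xv A * (Yv A * (Yv A * S)) - Xv A * (Xv A * (Yv A * S))
        - κ • (Xv A * (Xv A * (Yv A * (Yv A * S))))
        - Xv A * (Yv A * (Yv A * T)) + Xv A * (Xv A * (Yv A * T)) := by
  simp only [mul_sub, sub_mul, mul_smul_comm, smul_mul_assoc, mul_assoc, Yv_mul_Xv_mul]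
  module

theorem coeff_coeff_relLFactor_mul (a r : ℕ) :
    coeff (a + 2) (coeff (r + 2) ((Yv A - Xv A) * (Yv A - Xv A - κ • (Xv A * Yv A)) * S)) =
      coeff a (coeff (r + 2) S) - (2 : ℂ) • coeff (a + 1) (coeff (r + 1) S)
        + κ • coeff a (coeff (r + 1) S) + coeff (a + 2) (coeff r S)
        - κ • coeff (a + 1) (coeff r S) := by
  rw [relLFactor_mul_eq]
  simp only [map_sub, map_add, coeff_smul, Xv, Yv, coeff_C_mul, coeff_succ_X_mul]
  abel

theorem coeff_coeff_one_relLFactor_mul (a : ℕ) :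
    coeff (a + 2) (coeff 1 ((Yv A - Xv A) * (Yv A - Xv A - κ • (Xv A * Yv A)) * S)) =
      coeff a (coeff 1 S) - (2 : ℂ) • coeff (a + 1) (coeff 0 S) + κ • coeff a (coeff 0 S) := by
  rw [relLFactor_mul_eq]
  simp only [map_sub, map_add, coeff_smul, Xv, Yv, coeff_C_mul, coeff_succ_X_mul,
    coeff_zero_X_mul, map_zero, smul_zero]
  abel

theorem coeff_coeff_relRFactors_mul_sub (a r : ℕ) :
    coeff (a + 2) (coeff (r + 2) (Xv A * Yv A * (Yv A - Xv A - κ • (Xv A * Yv A)) * S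
        - Xv A * Yv A * (Yv A - Xv A) * T)) =
      coeff (a + 1) (coeff r S) - coeff a (coeff (r + 1) S) - κ • coeff a (coeff r S)
        - coeff (a + 1) (coeff r T) + coeff a (coeff (r + 1) T) := by
  rw [relRFactors_mul_sub_eq]
  simp only [map_sub, map_add, coeff_smul, Xv, Yv, coeff_C_mul, coeff_succ_X_mul]

theorem coeff_coeff_one_relRFactors_mul_sub (a : ℕ) :
    coeff (a + 2) (coeff 1 (Xv A * Yv A * (Yv A - Xv A - κ • (Xv A * Yv A)) * S
        - Xv A * Yv A * (Yv A - Xv A) * T)) =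
      -coeff a (coeff 0 S) + coeff a (coeff 0 T) := by
  rw [relRFactors_mul_sub_eq]
  simp only [map_sub, map_add, coeff_smul, Xv, Yv, coeff_C_mul, coeff_succ_X_mul,
    coeff_zero_X_mul, map_zero, smul_zero]
  abel

end DoubleSeries

section MapSeries

variable {A B : Type*} [Ring A] [Algebra ℂ A] [Ring B] [Algebra ℂ B] (φ : A →ₐ[ℂ] B)

theorem mapAlgHom_Xv : mapAlgHom (mapAlgHom φ) (Xv A) = Xv B := by
  simp [Xv, mapAlgHom_apply, map_C, map_X]

theorem mapAlgHom_Yv : mapAlgHom (mapAlgHom φ) (Yv A) = Yv B := by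
  simp [Yv, mapAlgHom_apply, map_X]

theorem mapAlgHom_Tx {I : Type*} (t : I → I → ℕ → A) (i j : I) :
    mapAlgHom (mapAlgHom φ) (Tx t i j) = Tx (fun i j r => φ (t i j r)) i j := by
  ext r c : 2
  simp only [Tx, mapAlgHom_apply, map_C, coeff_C]
  split_ifs <;> simp [mapAlgHom_apply, coeff_map]

theorem mapAlgHom_Ty {I : Type*} (t : I → I → ℕ → A) (i j : I) :
    mapAlgHom (mapAlgHom φ) (Ty t i j) = Ty (fun i j r => φ (t i j r)) i j := by
  ext r c : 2
  simp [Ty, mapAlgHom_apply, coeff_map, coeff_C]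

variable {n : ℕ} (t : Fin (NN n) → Fin (NN n) → ℕ → A) (i j k l : Fin (NN n))

theorem mapAlgHom_relL :
    mapAlgHom (mapAlgHom φ) (relL n t i j k l) = relL n (fun i j r => φ (t i j r)) i j k l := by
  simp only [relL, map_mul, map_sub, map_smul, mapAlgHom_Xv, mapAlgHom_Yv, mapAlgHom_Tx,
    mapAlgHom_Ty]

theorem mapAlgHom_relR :
    mapAlgHom (mapAlgHom φ) (relR n t i j k l) = relR n (fun i j r => φ (t i j r)) i j k l := by
  simp only [relR, map_mul, map_sub, map_smul, map_sum, apply_ite (mapAlgHom (mapAlgHom φ)),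
    map_zero, mapAlgHom_Xv, mapAlgHom_Yv, mapAlgHom_Tx, mapAlgHom_Ty]

end MapSeries

theorem satisfiesRTT_TT (n : ℕ) : SatisfiesRTT n (TT n) := by
  intro i j k l
  rw [show TT n = fun i j r => RingQuot.mkAlgHom ℂ (yrel n) (fgen n i j r) from rfl,
    ← mapAlgHom_relL, ← mapAlgHom_relR]
  ext r c : 2
  simp only [mapAlgHom_apply, coeff_map]
  exact RingQuot.mkAlgHom_rel ℂ ⟨i, j, k, l, r, c, rfl, rfl⟩

theorem TT_zero {n : ℕ} (i j : Fin (NN n)) : TT n i j 0 = if i = j then 1 else 0 := by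
  rw [TT, fgen, if_pos rfl]
  split_ifs <;> simp

section Indices

theorem sg_of_even {m : ℕ} (h : Even m) : sg m = 1 := h.neg_one_pow

variable {n : ℕ}

theorem pr_pr (k : Fin (NN n)) : pr (pr k) = k := by
  have hk : (k : ℕ) < 2 * n + 1 := k.isLt
  ext; simp only [pr, idx]; omega

theorem pr_eq_iff {k i : Fin (NN n)} : pr k = i ↔ k = pr i := by
  constructor <;> rintro rfl <;> simp [pr_pr]

theorem pb_pr (k : Fin (NN n)) : pb (pr k) = pb k := by
  have hk : (k : ℕ) < 2 * n + 1 := k.isLt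
  unfold pb pr idx; split_ifs <;> simp_all <;> omega

theorem natCast_pr (k : Fin (NN n)) : ((pr k : ℕ) : ℂ) = 2 * n - k := by
  have hk : (k : ℕ) ≤ 2 * n := Nat.lt_succ_iff.mp k.isLt
  simp only [pr, idx, Nat.cast_sub hk]; push_cast; ring

theorem sum_ite_pr_eq {M : Type*} [AddCommMonoid M] (k : Fin (NN n)) (f : Fin (NN n) → M) :
    ∑ p, (if pr p = k then f p else 0) = f (pr k) := by
  simp_rw [pr_eq_iff]; simp

theorem sum_ite_eq_pr {M : Type*} [AddCommMonoid M] (k : Fin (NN n)) (f : Fin (NN n) → M) :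
    ∑ p, (if k = pr p then f p else 0) = f (pr k) := by
  simp_rw [← pr_eq_iff]; simp

end Indices

/-- The weight of the basis vector `e_i` for the Cartan element `t_{kk}^{(1)}`. -/
def cartanWeight {n : ℕ} (k i : Fin (NN n)) : ℂ :=
  sg (pb i) * ((if k = i then 1 else 0) - (if k = pr i then 1 else 0))

theorem sum_mul_cartanWeight {n : ℕ} (i : Fin (NN n)) :
    ∑ k : Fin (NN n), ((k : ℂ) - n) / 2 * cartanWeight k i = n - i := by
  simp only [cartanWeight, mul_sub, mul_ite, mul_one, mul_zero, Finset.sum_sub_distrib,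
    Finset.sum_ite_eq', Finset.mem_univ, if_true, natCast_pr, ← sub_mul]
  rcases eq_or_ne (i : ℕ) n with h | h
  · simp only [sg, pb, if_pos h, show ((i : ℕ) : ℂ) = n by exact_mod_cast h]; ring
  · simp only [sg, pb, if_neg h]; ring

section RTTFamily

variable {A : Type*} [Ring A] [Algebra ℂ A] {n : ℕ} (t : Fin (NN n) → Fin (NN n) → ℕ → A)

def superComm (i j k l : Fin (NN n)) (a r : ℕ) : A :=
  t i j a * t k l r - sg ((pb i + pb j) * (pb k + pb l)) • (t k l r * t i j a)

/-- The coefficient of `u^{-a} v^{-r}` in the term `A` of `relR`. -/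
def rttA (i j k l : Fin (NN n)) (a r : ℕ) : A :=
  sg (pb i * pb j + pb i * pb k + pb j * pb k) • (t k j a * t i l r - t k j r * t i l a)

/-- The coefficient of `u^{-a} v^{-r}` in the term `B` of `relR`. -/
def rttB (i j k l : Fin (NN n)) (a r : ℕ) : A :=
  (if k = pr i then
      ∑ p : Fin (NN n), (sg (pb i + pb i * pb j + pb j * pb p) * tau i * tau p) •
        (t p j a * t (pr p) l r)
    else 0)
  - (if l = pr j then
      ∑ p : Fin (NN n), (sg (pb j + pb p + pb i * pb k + pb j * pb k + pb i * pb p)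
          * tau j * tau p) • (t k (pr p) r * t i p a)
    else 0)

def quadSpan (m : ℕ) : Submodule ℂ A :=
  Submodule.span ℂ {x | ∃ a b c d p q, p + q ≤ m ∧ x = t a b p * t c d q}

/-- The weights `(k − n)/2` are chosen so that `[h, t_{ij}^{(r)}] = (j − i) t_{ij}^{(r)}`. -/
def gradingElement : A := ∑ k : Fin (NN n), (((k : ℂ) - n) / 2) • t k k 1

variable (i j k l : Fin (NN n)) (a r : ℕ)

theorem coeff_coeff_superCommSeries :
    coeff a (coeff r (Tx t i j * Ty t k l
        - sg ((pb i + pb j) * (pb k + pb l)) • (Ty t k l * Tx t i j)))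
      = superComm t i j k l a r := by
  simp only [map_sub, coeff_smul, coeff_coeff_Tx_mul_Ty, coeff_coeff_Ty_mul_Tx, superComm]

theorem coeff_coeff_rttASeries :
    coeff a (coeff r (sg (pb i * pb j + pb i * pb k + pb j * pb k) •
        (Tx t k j * Ty t i l - Ty t k j * Tx t i l))) = rttA t i j k l a r := by
  simp only [map_sub, coeff_smul, coeff_coeff_Tx_mul_Ty, coeff_coeff_Ty_mul_Tx, rttA]

theorem coeff_coeff_rttBSeries :
    coeff a (coeff r ((if k = pr i then
          ∑ p : Fin (NN n), (sg (pb i + pb i * pb j + pb j * pb p) * tau i * tau p) •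
            (Tx t p j * Ty t (pr p) l)
        else 0)
       - (if l = pr j then
          ∑ p : Fin (NN n), (sg (pb j + pb p + pb i * pb k + pb j * pb k + pb i * pb p)
              * tau j * tau p) • (Ty t k (pr p) * Tx t i p)
        else 0))) = rttB t i j k l a r := by
  simp only [rttB, map_sub, apply_ite (coeff r), apply_ite (coeff a), map_sum, coeff_smul,
    map_zero, coeff_coeff_Tx_mul_Ty, coeff_coeff_Ty_mul_Tx]

variable {t}

theorem mul_mem_quadSpan {a b c d : Fin (NN n)} {p q m : ℕ} (h : p + q ≤ m) :
    t a b p * t c d q ∈ quadSpan t m :=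
  Submodule.subset_span ⟨a, b, c, d, p, q, h, rfl⟩

theorem quadSpan_mono {m m' : ℕ} (h : m ≤ m') : quadSpan t m ≤ quadSpan t m' :=
  Submodule.span_mono fun _ ⟨a, b, c, d, p, q, hpq, hx⟩ => ⟨a, b, c, d, p, q, hpq.trans h, hx⟩

variable {i j k l a r}

theorem rttA_mem_quadSpan {m : ℕ} (h : a + r ≤ m) : rttA t i j k l a r ∈ quadSpan t m :=
  Submodule.smul_mem _ _ (sub_mem (mul_mem_quadSpan h) (mul_mem_quadSpan (by omega)))

theorem rttB_mem_quadSpan {m : ℕ} (h : a + r ≤ m) : rttB t i j k l a r ∈ quadSpan t m := by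
  unfold rttB
  refine sub_mem ?_ ?_ <;> split_ifs <;>
    first
    | exact zero_mem _
    | exact sum_mem fun p _ => Submodule.smul_mem _ _ (mul_mem_quadSpan (by omega))

theorem mul_eq_smul_mul_add_superComm :
    t i j a * t k l r
      = sg ((pb i + pb j) * (pb k + pb l)) • (t k l r * t i j a) + superComm t i j k l a r := by
  rw [superComm]; abel

variable (hrtt : SatisfiesRTT n t)
include hrtt

variable (i j k l a r) in
theorem SatisfiesRTT.superComm_add_two :
    superComm t i j k l a (r + 2) - (2 : ℂ) • superComm t i j k l (a + 1) (r + 1)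
        + kappa n • superComm t i j k l a (r + 1)
        + superComm t i j k l (a + 2) r - kappa n • superComm t i j k l (a + 1) r
      = rttA t i j k l (a + 1) r - rttA t i j k l a (r + 1) - kappa n • rttA t i j k l a r
        - rttB t i j k l (a + 1) r + rttB t i j k l a (r + 1) := by
  have := congrArg (fun F => coeff (a + 2) (coeff (r + 2) F)) (hrtt i j k l)
  simpa only [relL, relR, coeff_coeff_relLFactor_mul, coeff_coeff_relRFactors_mul_sub,
    coeff_coeff_superCommSeries, coeff_coeff_rttASeries, coeff_coeff_rttBSeries] using this

variable (i j k l a) in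
theorem SatisfiesRTT.superComm_one :
    superComm t i j k l a 1 - (2 : ℂ) • superComm t i j k l (a + 1) 0
        + kappa n • superComm t i j k l a 0
      = -rttA t i j k l a 0 + rttB t i j k l a 0 := by
  have := congrArg (fun F => coeff (a + 2) (coeff 1 F)) (hrtt i j k l)
  simpa only [relL, relR, coeff_coeff_one_relLFactor_mul, coeff_coeff_one_relRFactors_mul_sub,
    coeff_coeff_superCommSeries, coeff_coeff_rttASeries, coeff_coeff_rttBSeries] using this

end RTTFamily

section UnitConstantTerm

variable {A : Type*} [Ring A] [Algebra ℂ A] {n : ℕ} {t : Fin (NN n) → Fin (NN n) → ℕ → A}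
  (ht0 : ∀ i j, t i j 0 = if i = j then 1 else 0)
include ht0

theorem superComm_zero_right (i j k l : Fin (NN n)) (a : ℕ) : superComm t i j k l a 0 = 0 := by
  rw [superComm, ht0]
  split_ifs with hkl
  · rw [hkl, sg_of_even (by simp), one_smul, one_mul, mul_one, sub_self]
  · rw [zero_mul, mul_zero, smul_zero, sub_zero]

theorem rttA_zero_right_diag (i j k : Fin (NN n)) (s : ℕ) :
    rttA t i j k k s 0 =
      ((if k = i then sg (pb i) else 0) - (if k = j then sg (pb j) else 0)) • t i j s := by
  have h1 : sg (pb i * pb j + pb i * pb i + pb j * pb i) = sg (pb i) := by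
    simp only [sg, pb]; split_ifs <;> norm_num
  have h2 : sg (pb i * pb j + pb i * pb j + pb j * pb j) = sg (pb j) := by
    simp only [sg, pb]; split_ifs <;> norm_num
  rw [rttA, ht0, ht0, sub_smul, smul_sub]
  congr 1
  · rcases eq_or_ne k i with rfl | hki
    · rw [if_pos rfl, if_pos rfl, mul_one, h1]
    · rw [if_neg (Ne.symm hki), if_neg hki, mul_zero, smul_zero, zero_smul]
  · rcases eq_or_ne k j with rfl | hkj
    · rw [if_pos rfl, if_pos rfl, one_mul, h2]
    · rw [if_neg hkj, if_neg hkj, zero_mul, smul_zero, zero_smul]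

theorem rttB_zero_right_diag (i j k : Fin (NN n)) (s : ℕ) :
    rttB t i j k k s 0 =
      ((if k = pr i then sg (pb i) else 0) - (if k = pr j then sg (pb j) else 0)) • t i j s := by
  have h1 : sg (pb i + pb i * pb j + pb j * pb i) * tau i * tau i = sg (pb i) := by
    simp only [sg, pb, tau]; split_ifs <;> norm_num
  have h2 : sg (pb j + pb j + pb i * pb j + pb j * pb j + pb i * pb j) * tau j * tau j
      = sg (pb j) := by
    simp only [sg, pb, tau]; split_ifs <;> norm_num
  simp only [rttB, ht0, mul_ite, mul_one, mul_zero, ite_mul, one_mul, zero_mul, smul_ite,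
    smul_zero, sum_ite_pr_eq, sum_ite_eq_pr, sub_smul]
  congr 1
  · split_ifs with hk
    · rw [hk, pr_pr, h1]
    · rw [zero_smul]
  · split_ifs with hk
    · rw [hk, pr_pr, pb_pr, h2]
    · rw [zero_smul]

theorem SatisfiesRTT.diag_one_mul_sub_mul (hrtt : SatisfiesRTT n t) (i j k : Fin (NN n)) (s : ℕ) :
    t k k 1 * t i j s - t i j s * t k k 1 = (cartanWeight k i - cartanWeight k j) • t i j s := by
  have h := hrtt.superComm_one i j k k s
  rw [superComm_zero_right ht0, superComm_zero_right ht0, smul_zero, smul_zero, sub_zero,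
    add_zero, superComm, sg_of_even (by simp), one_smul, rttA_zero_right_diag ht0,
    rttB_zero_right_diag ht0] at h
  rw [← neg_sub, h, cartanWeight, cartanWeight]
  split_ifs <;> module

theorem SatisfiesRTT.gradingElement_mul_sub_mul (hrtt : SatisfiesRTT n t) (i j : Fin (NN n))
    (s : ℕ) :
    gradingElement t * t i j s - t i j s * gradingElement t = ((j : ℂ) - i) • t i j s := by
  rw [gradingElement, Finset.sum_mul, Finset.mul_sum, ← Finset.sum_sub_distrib]
  simp_rw [smul_mul_assoc, mul_smul_comm, ← smul_sub, hrtt.diag_one_mul_sub_mul ht0, smul_smul]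
  rw [← Finset.sum_smul]
  simp only [mul_sub, Finset.sum_sub_distrib, sum_mul_cartanWeight]
  ring_nf

theorem SatisfiesRTT.superComm_mem_quadSpan (hrtt : SatisfiesRTT n t) (i j k l : Fin (NN n)) :
    ∀ r a : ℕ, superComm t i j k l a r ∈ quadSpan t (a + r - 1)
  | 0, a => by rw [superComm_zero_right ht0]; exact zero_mem _
  | 1, a => by
    have h := hrtt.superComm_one i j k l a
    rw [superComm_zero_right ht0, superComm_zero_right ht0, smul_zero, smul_zero, sub_zero,
      add_zero] at h
    rw [h]
    exact add_mem (neg_mem (rttA_mem_quadSpan (by omega))) (rttB_mem_quadSpan (by omega))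
  | r + 2, a => by
    have key : superComm t i j k l a (r + 2) =
        (rttA t i j k l (a + 1) r - rttA t i j k l a (r + 1) - kappa n • rttA t i j k l a r
          - rttB t i j k l (a + 1) r + rttB t i j k l a (r + 1))
        + (2 : ℂ) • superComm t i j k l (a + 1) (r + 1) - kappa n • superComm t i j k l a (r + 1)
        - superComm t i j k l (a + 2) r + kappa n • superComm t i j k l (a + 1) r := by
      rw [← hrtt.superComm_add_two]; module
    have ih : ∀ r' a', r' < r + 2 → a' + r' ≤ a + r + 2 →
        superComm t i j k l a' r' ∈ quadSpan t (a + (r + 2) - 1) := fun r' a' _ _ =>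
      quadSpan_mono (by omega) (hrtt.superComm_mem_quadSpan i j k l r' a')
    rw [key]
    refine add_mem (sub_mem (sub_mem (add_mem ?_ (Submodule.smul_mem _ _ (ih _ _ ?_ ?_)))
      (Submodule.smul_mem _ _ (ih _ _ ?_ ?_))) (ih _ _ ?_ ?_))
      (Submodule.smul_mem _ _ (ih _ _ ?_ ?_))
    · refine add_mem (sub_mem (sub_mem (sub_mem ?_ ?_) (Submodule.smul_mem _ _ ?_)) ?_) ?_ <;>
        first | exact rttA_mem_quadSpan (by omega) | exact rttB_mem_quadSpan (by omega)
    all_goals omega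

end UnitConstantTerm

section LowerSpan

variable {A : Type*} [Ring A] {n : ℕ} {t : Fin (NN n) → Fin (NN n) → ℕ → A}
  {V : Type*} [AddCommGroup V] [Module ℂ V] [Module A V] {ξ : V}

variable (t ξ) in
inductive LowerMonomial : ℕ → V → Prop
  | self : LowerMonomial 0 ξ
  | smul {i j : Fin (NN n)} {r d : ℕ} {x : V} :
      j ≤ i → LowerMonomial d x → LowerMonomial (d + r) (t i j r • x)

variable (t ξ) in
def lowerSpan (m : ℕ) : Submodule ℂ V :=
  Submodule.span ℂ {x | ∃ d ≤ m, LowerMonomial t ξ d x}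

theorem lowerSpan_mono : Monotone (lowerSpan t ξ) := fun _ _ h =>
  Submodule.span_mono fun _ ⟨d, hd, hx⟩ => ⟨d, hd.trans h, hx⟩

theorem LowerMonomial.mem_lowerSpan {d m : ℕ} {x : V} (hx : LowerMonomial t ξ d x) (h : d ≤ m) :
    x ∈ lowerSpan t ξ m :=
  Submodule.subset_span ⟨d, h, hx⟩

variable [Algebra ℂ A] [IsScalarTower ℂ A V]

theorem smul_mem_lowerSpan_of_le {i j : Fin (NN n)} (hji : j ≤ i) (r : ℕ) {m : ℕ} {x : V}
    (hx : x ∈ lowerSpan t ξ m) : t i j r • x ∈ lowerSpan t ξ (m + r) := by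
  induction hx using Submodule.span_induction with
  | mem x hx =>
    obtain ⟨d, hd, hx⟩ := hx
    exact (hx.smul hji).mem_lowerSpan (by omega)
  | zero => rw [smul_zero]; exact zero_mem _
  | add x y _ _ hx hy => rw [smul_add]; exact add_mem hx hy
  | smul c x _ hx => rw [smul_comm]; exact Submodule.smul_mem _ c hx

variable (hrtt : SatisfiesRTT n t) (ht0 : ∀ i j, t i j 0 = if i = j then 1 else 0)
  (hξ : ∀ i j, i < j → ∀ r, t i j r • ξ = 0)
include hrtt ht0 hξ

/-- Move `t_{ij}^{(p)}` past the leftmost factor of the monomial; the supercommutator this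
produces has degree `< p + r` and is handled by `IH`. -/
theorem smul_lowerMonomial_mem_lowerSpan {N : ℕ}
    (IH : ∀ i j p m x, m + p < N → x ∈ lowerSpan t ξ m → t i j p • x ∈ lowerSpan t ξ (m + p))
    {i j : Fin (NN n)} (hij : i < j) (p : ℕ) {d : ℕ} {x : V} (hx : LowerMonomial t ξ d x)
    (hN : d + p ≤ N) : t i j p • x ∈ lowerSpan t ξ (d + p) := by
  rcases Nat.eq_zero_or_pos p with rfl | hp
  · rw [ht0, if_neg hij.ne, zero_smul]; exact zero_mem _
  induction hx with
  | self => rw [hξ i j hij]; exact zero_mem _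
  | @smul k l r d y hlk hy ihy =>
    rw [← mul_smul, mul_eq_smul_mul_add_superComm, add_smul, smul_assoc, mul_smul]
    refine add_mem (Submodule.smul_mem _ _ ?_) ?_
    · exact lowerSpan_mono (by omega) (smul_mem_lowerSpan_of_le hlk r (ihy (by omega)))
    · refine smul_mem_of_mem_span (hrtt.superComm_mem_quadSpan ht0 i j k l r p) ?_
      rintro _ ⟨a, b, c, e, p', q', hpq, rfl⟩
      rw [mul_smul]
      have hy' := IH c e q' d y (by omega) (hy.mem_lowerSpan le_rfl)
      exact lowerSpan_mono (by omega) (IH a b p' (d + q') _ (by omega) hy')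

theorem smul_mem_lowerSpan (i j : Fin (NN n)) (p : ℕ) {m : ℕ} {x : V}
    (hx : x ∈ lowerSpan t ξ m) : t i j p • x ∈ lowerSpan t ξ (m + p) := by
  suffices ∀ N i j p m x, m + p < N → x ∈ lowerSpan t ξ m → t i j p • x ∈ lowerSpan t ξ (m + p)
    from this _ i j p m x (Nat.lt_succ_self _) hx
  intro N
  induction N with
  | zero => intros; omega
  | succ N IH =>
  intro i j p m x hN hx
  rcases le_or_gt j i with hji | hij
  · exact smul_mem_lowerSpan_of_le hji p hx
  induction hx using Submodule.span_induction with
  | mem x hx =>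
    obtain ⟨d, hd, hx⟩ := hx
    exact lowerSpan_mono (by omega)
      (smul_lowerMonomial_mem_lowerSpan hrtt ht0 hξ IH hij p hx (by omega))
  | zero => rw [smul_zero]; exact zero_mem _
  | add x y _ _ hx hy => rw [smul_add]; exact add_mem hx hy
  | smul c x _ hx => rw [smul_comm]; exact Submodule.smul_mem _ c hx

end LowerSpan

section Grading

variable {A : Type*} [Ring A] [Algebra ℂ A] {n : ℕ} {t : Fin (NN n) → Fin (NN n) → ℕ → A}
  {V : Type*} [AddCommGroup V] [Module ℂ V] [Module A V] [IsScalarTower ℂ A V] {ξ : V}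

theorem smul_mem_eigenspace_of_mul_sub_mul {a b : A} {d : ℂ} (hab : a * b - b * a = d • b)
    {μ : ℂ} {v : V} (hv : v ∈ (Module.toModuleEnd ℂ V a).eigenspace μ) :
    b • v ∈ (Module.toModuleEnd ℂ V a).eigenspace (μ + d) := by
  rw [Module.End.mem_eigenspace_iff, Module.toModuleEnd_apply,
    DistribSMul.toLinearMap_apply] at hv ⊢
  rw [← mul_smul, sub_eq_iff_eq_add.mp hab, add_smul, mul_smul, hv, smul_assoc, smul_comm b μ v,
    add_smul, add_comm]

variable (hrtt : SatisfiesRTT n t) (ht0 : ∀ i j, t i j 0 = if i = j then 1 else 0) {Λ : ℂ}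
  (hΛ : ξ ∈ (Module.toModuleEnd ℂ V (gradingElement t)).eigenspace Λ)
  (hdiag : ∀ i r, t i i r • ξ ∈ ℂ ∙ ξ)
include hrtt ht0 hΛ hdiag

theorem smul_mem_belowSpan_of_le {i j : Fin (NN n)} (hji : j ≤ i) (r : ℕ) {x : V}
    (hx : x ∈ (Module.toModuleEnd ℂ V (gradingElement t)).belowSpan ξ Λ) :
    t i j r • x ∈ (Module.toModuleEnd ℂ V (gradingElement t)).belowSpan ξ Λ := by
  obtain ⟨e, he⟩ := Nat.exists_eq_add_of_le (Fin.le_def.mp hji)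
  have hshift : ∀ μ v, v ∈ (Module.toModuleEnd ℂ V (gradingElement t)).eigenspace μ →
      t i j r • v ∈ (Module.toModuleEnd ℂ V (gradingElement t)).eigenspace (μ - e) := by
    intro μ v hv
    convert smul_mem_eigenspace_of_mul_sub_mul (hrtt.gradingElement_mul_sub_mul ht0 i j r) hv
      using 2
    rw [show ((i : ℕ) : ℂ) = j + e by exact_mod_cast he]; ring
  obtain ⟨y, hy, z, hz, rfl⟩ := Submodule.mem_sup.mp hx
  clear hx
  obtain ⟨c, rfl⟩ := Submodule.mem_span_singleton.mp hy
  rw [smul_add, smul_comm]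
  refine add_mem ?_ (Submodule.mem_sup_right ?_)
  · rcases e with _ | e
    · rw [show i = j from Fin.ext he]
      exact Submodule.mem_sup_left (Submodule.smul_mem _ _ (hdiag j r))
    · refine Submodule.mem_sup_right (Submodule.smul_mem _ _ (Submodule.mem_iSup_of_mem e ?_))
      simpa using hshift Λ ξ hΛ
  · induction hz using Submodule.iSup_induction' with
    | mem k z hz =>
      refine Submodule.mem_iSup_of_mem (k + e) ?_
      rw [Nat.cast_add, add_right_comm, ← sub_sub]
      exact hshift _ z hz
    | zero => rw [smul_zero]; exact zero_mem _
    | add z z' _ _ hz hz' => rw [smul_add]; exact add_mem hz hz'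

theorem lowerSpan_le_belowSpan (m : ℕ) :
    lowerSpan t ξ m ≤ (Module.toModuleEnd ℂ V (gradingElement t)).belowSpan ξ Λ := by
  rw [lowerSpan, Submodule.span_le]
  rintro _ ⟨d, -, hx⟩
  induction hx with
  | self => exact Submodule.mem_sup_left (Submodule.mem_span_singleton_self ξ)
  | smul hji _ ih => exact smul_mem_belowSpan_of_le hrtt ht0 hΛ hdiag hji _ ih

end Grading

section HighestVector

variable {n : ℕ} {V : Type*} [AddCommGroup V] [Module ℂ V] [Module (XX n) V]
  [IsScalarTower ℂ (XX n) V] {ξ : V}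

theorem exists_mem_lowerSpan (hspan : Submodule.span (XX n) {ξ} = ⊤) (hξ : ξ ∈ Vzero n V)
    (v : V) : ∃ m, v ∈ lowerSpan (TT n) ξ m := by
  obtain ⟨a, rfl⟩ := Submodule.mem_span_singleton.mp (hspan ▸ Submodule.mem_top : v ∈ _)
  obtain ⟨z, rfl⟩ := RingQuot.mkAlgHom_surjective ℂ (yrel n) a
  suffices ∀ m x, x ∈ lowerSpan (TT n) ξ m →
      ∃ m', RingQuot.mkAlgHom ℂ (yrel n) z • x ∈ lowerSpan (TT n) ξ m' from
    this 0 ξ (LowerMonomial.self.mem_lowerSpan le_rfl)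
  induction z using FreeAlgebra.induction with
  | grade0 c =>
    intro m x hx
    exact ⟨m, by rw [AlgHom.commutes, algebraMap_smul]; exact Submodule.smul_mem _ c hx⟩
  | grade1 g =>
    intro m x hx
    exact ⟨_, smul_mem_lowerSpan (satisfiesRTT_TT n) TT_zero hξ g.1 g.2.1 (g.2.2 + 1) hx⟩
  | mul a b ha hb =>
    intro m x hx
    obtain ⟨m₁, h₁⟩ := hb m x hx
    obtain ⟨m₂, h₂⟩ := ha m₁ _ h₁
    exact ⟨m₂, by rw [map_mul, mul_smul]; exact h₂⟩
  | add a b ha hb =>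
    intro m x hx
    obtain ⟨m₁, h₁⟩ := ha m x hx
    obtain ⟨m₂, h₂⟩ := hb m x hx
    refine ⟨max m₁ m₂, ?_⟩
    rw [map_add, add_smul]
    exact add_mem (lowerSpan_mono (le_max_left _ _) h₁) (lowerSpan_mono (le_max_right _ _) h₂)

theorem isTopEigenvector_gradingElement (hspan : Submodule.span (XX n) {ξ} = ⊤)
    (hξ : ξ ∈ Vzero n V) (hdiag : ∀ i r, TT n i i r • ξ ∈ ℂ ∙ ξ) :
    ∃ Λ, (Module.toModuleEnd ℂ V (gradingElement (TT n))).IsTopEigenvector ξ Λ := by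
  have hmem : gradingElement (TT n) • ξ ∈ ℂ ∙ ξ := by
    rw [gradingElement, Finset.sum_smul]
    exact sum_mem fun k _ => by rw [smul_assoc]; exact Submodule.smul_mem _ _ (hdiag k 1)
  obtain ⟨Λ, hΛ⟩ := Submodule.mem_span_singleton.mp hmem
  have hΛ' : ξ ∈ (Module.toModuleEnd ℂ V (gradingElement (TT n))).eigenspace Λ :=
    Module.End.mem_eigenspace_iff.mpr hΛ.symm
  refine ⟨Λ, hΛ', eq_top_iff.mpr fun v _ => ?_⟩
  obtain ⟨m, hm⟩ := exists_mem_lowerSpan hspan hξ v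
  exact lowerSpan_le_belowSpan (satisfiesRTT_TT n) TT_zero hΛ' hdiag m hm

end HighestVector

theorem highest_vector_unique_general
    (n : ℕ) (V : Type) [AddCommGroup V] [Module ℂ V]
    [Module (XX n) V] [IsScalarTower ℂ (XX n) V]
    (hV : IsSimpleModule (XX n) V)
    (ξ ξ' : V)
    (hξ : ξ ≠ 0 ∧ (∀ i j : Fin (NN n), i < j → ∀ r : ℕ, TT n i j r • ξ = 0) ∧
      ∃ lam : Fin (NN n) → ℕ → ℂ, ∀ (i : Fin (NN n)) (r : ℕ),
        TT n i i r • ξ = lam i r • ξ)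
    (hξ' : ξ' ≠ 0 ∧ (∀ i j : Fin (NN n), i < j → ∀ r : ℕ, TT n i j r • ξ' = 0) ∧
      ∃ mu : Fin (NN n) → ℕ → ℂ, ∀ (i : Fin (NN n)) (r : ℕ),
        TT n i i r • ξ' = mu i r • ξ') :
    ∃ c : ℂ, ξ' = c • ξ := by
  obtain ⟨hξ0, hξ, lam, hlam⟩ := hξ
  obtain ⟨hξ'0, hξ', mu, hmu⟩ := hξ'
  obtain ⟨Λ, hΛ⟩ := isTopEigenvector_gradingElement (IsSimpleModule.span_singleton_eq_top _ hξ0)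
    hξ fun i r => hlam i r ▸ Submodule.smul_mem _ _ (Submodule.mem_span_singleton_self ξ)
  obtain ⟨μ, hμ⟩ := isTopEigenvector_gradingElement (IsSimpleModule.span_singleton_eq_top _ hξ'0)
    hξ' fun i r => hmu i r ▸ Submodule.smul_mem _ _ (Submodule.mem_span_singleton_self ξ')
  exact hΛ.exists_eq_smul hμ hξ0 hξ'0

/-- In a finite-dimensional irreducible representation of `X(osp_{1|2n})`,
a highest vector is determined uniquely up to a constant factor. -/
theorem highest_vector_unique
    (n : ℕ) (hn : 1 ≤ n) (V : Type) [AddCommGroup V] [Module ℂ V]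
    [Module (XX n) V] [IsScalarTower ℂ (XX n) V]
    [FiniteDimensional ℂ V] (hV : IsSimpleModule (XX n) V)
    (ξ ξ' : V)
    (hξ : ξ ≠ 0 ∧ (∀ i j : Fin (NN n), i < j → ∀ r : ℕ, TT n i j r • ξ = 0) ∧
      ∃ lam : Fin (NN n) → ℕ → ℂ, ∀ (i : Fin (NN n)) (r : ℕ),
        TT n i i r • ξ = lam i r • ξ)
    (hξ' : ξ' ≠ 0 ∧ (∀ i j : Fin (NN n), i < j → ∀ r : ℕ, TT n i j r • ξ' = 0) ∧
      ∃ mu : Fin (NN n) → ℕ → ℂ, ∀ (i : Fin (NN n)) (r : ℕ),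
        TT n i i r • ξ' = mu i r • ξ') :
    ∃ c : ℂ, ξ' = c • ξ :=
  highest_vector_unique_general n V hV ξ ξ' hξ hξ'

end OspYangian
end
end

section
/- For 1 ≤ k ≤ n, let T_{ij}(u) be the operators on (ℂ^{1|2n})^{⊗k} defined by T_{ij}(u) = Σ_{a_1,…,a_{k−1}=1}^{2n+1} t_{ia_1}(u)⊗t_{a_1a_2}(u−1)⊗…⊗t_{a_{k−1}j}(u−k+1), where each factor acts on its copy of ℂ^{1|2n} via the vector representation. Then the antisymmetric vector ξ_k = Σ_{σ∈S_k} sgn(σ)·e_{σ(1)}⊗…⊗e_{σ(k)} satisfies T_{ij}(u)ξ_k = 0 for all 1 ≤ i < j ≤ n+1. -/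
/-!
Common definitions for the Yangian `X(osp_{1|2n})` associated with the orthosymplectic
Lie superalgebra `osp(1|2n)`, following Molev, "Representations of the Yangians
associated with Lie superalgebras osp(1|2n)".

Indices are 0-based: the index set {1,…,2n+1} of the paper corresponds to `Fin (2n+1)`,
the involution i ↦ i′ = 2n−i+2 corresponds to `pr : i ↦ 2n−i`, the parity ī is 1 unless
i is the middle index `n`, and τ_i = 1 for i ≤ n and −1 for i > n.

The extended Yangian is presented by the coefficients `t_{ij}^{(r)}` (`r ≥ 1`) of the series
`t_{ij}(u) = δ_{ij} + Σ_{r≥1} t_{ij}^{(r)} u^{−r}`, subject to the defining RTT relations,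
written in the equivalent explicit component form (formula (2.9) of the paper), with
denominators cleared.  Working with the variables `x = u⁻¹` and `y = v⁻¹`, so that
`u − v = (y−x)/(xy)` and `u − v − κ = (y − x − κxy)/(xy)`, the relation
`[t_{ij}(u), t_{kl}(v)] = (u−v)⁻¹ (⋯) − (u−v−κ)⁻¹ (⋯)` becomes the power series identity
`relL = relR` below, and the Yangian is the quotient of the free algebra by the
coefficient-wise relations.
-/

noncomputable section

/-!
Since `ξ_k` only involves `e_1, …, e_k` with `k ≤ n`, and `i ≤ n`, no chain of indices
`i = a_0, a_1, …, a_k = j` contributing to `T_{ij}(u) ξ_k` can leave `{1, …, n}`: at its first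
exit the factor `t_{a_p a_{p+1}}` kills the basis vector it meets. On these indices every parity
is odd, the Koszul signs cancel, and `t_{ab}(u)` acts as `δ_{ab} − u⁻¹ E_{ab}`, the evaluation
representation of `Y(gl_n)`. Peeling off the first tensor factor, induction on `k` shows that on
every antisymmetric tensor `v` the fused operator acts as
`T_{ab}(u) v = δ_{ab} v − (u−k+1)⁻¹ E_{ab} v`, with `E_{ab}` acting as a derivation; the
induction closes because the slices `v_s` of `v` satisfy `Σ_s E_{sb} v_s = −(k−1) v_b`.
Finally `E_{ij} ξ_k = 0` for `i < j`, since it replaces `e_j` by `e_i` in `e_1 ∧ ⋯ ∧ e_k`.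
-/

lemma Fin.forall_or_exists_castSucc_and_not_succ {k : ℕ} {P : Fin (k + 1) → Prop} (h0 : P 0) :
    (∀ q, P q) ∨ ∃ p : Fin k, P p.castSucc ∧ ¬P p.succ := by
  by_cases h : ∃ p : Fin k, P p.castSucc ∧ ¬P p.succ
  · exact Or.inr h
  · simp only [not_exists, not_and, not_not] at h
    exact Or.inl fun q => Fin.induction h0 h q

namespace OspYangian

open Finset Function
open scoped Matrix

section Fusion

variable {K ι : Type*} [Field K] {k : ℕ}

def IsAntisymm (v : (Fin k → ι) → K) : Prop :=
  ∀ (c : Fin k → ι) (p q : Fin k), p ≠ q → v (c ∘ Equiv.swap p q) = -v c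

lemma IsAntisymm.cons {v : (Fin (k + 1) → ι) → K} (hv : IsAntisymm v) (s : ι) :
    IsAntisymm fun c : Fin k → ι => v (Fin.cons s c) := fun c p q hpq =>
  (congrArg v (Matrix.cons_swap s c p q)).trans (hv _ _ _ (Fin.succ_injective _ |>.ne hpq))

lemma IsAntisymm.eq_zero_of_not_injective [CharZero K] {v : (Fin k → ι) → K} (hv : IsAntisymm v)
    {c : Fin k → ι} (hc : ¬Injective c) : v c = 0 := by
  obtain ⟨p, q, hcpq, hpq⟩ : ∃ p q, c p = c q ∧ p ≠ q := by simpa [Injective] using hc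
  have hfix : c ∘ Equiv.swap p q = c := by
    ext x
    simp only [comp_apply, Equiv.swap_apply_def]
    split_ifs <;> simp_all
  have hneg := hv c p q hpq
  rw [hfix] at hneg
  exact self_eq_neg.mp hneg

variable [DecidableEq ι]

/-- The matrix entry `(c, d)` of `t_{ab}(w) = δ_{ab} − w⁻¹ E_{ab}` in the vector representation
of `Y(gl_N)`. -/
def glVrepE (w : K) (a b c d : ι) : K :=
  (if a = b ∧ c = d then 1 else 0) - w⁻¹ * (if c = a ∧ d = b then 1 else 0)

lemma glVrepE_eq_zero (w : K) {a b c d : ι} (hab : a ≠ b) (hdb : d ≠ b) :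
    glVrepE w a b c d = 0 := by
  simp [glVrepE, hab, hdb]

/-- The matrix unit `E_{ab}` acting on the `k`-th tensor power as a derivation. -/
def matrixUnitAct (a b : ι) (v : (Fin k → ι) → K) : (Fin k → ι) → K := fun c =>
  ∑ m : Fin k, if c m = a then v (update c m b) else 0

lemma matrixUnitAct_cons (a b : ι) (v : (Fin (k + 1) → ι) → K) (s : ι) (c : Fin k → ι) :
    matrixUnitAct a b v (Fin.cons s c) =
      (if s = a then v (Fin.cons b c) else 0) +
        matrixUnitAct a b (fun c => v (Fin.cons s c)) c := by
  simp only [matrixUnitAct, Fin.sum_univ_succ, Fin.cons_zero, Fin.cons_succ, Fin.update_cons_zero,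
    Fin.cons_update]

section FusedOperator

variable [Fintype ι]

lemma IsAntisymm.sum_matrixUnitAct_cons {v : (Fin (k + 1) → ι) → K} (hv : IsAntisymm v)
    (b : ι) (c : Fin k → ι) :
    ∑ s, matrixUnitAct s b (fun c => v (Fin.cons s c)) c = -(k * v (Fin.cons b c)) := by
  have hswap (m : Fin k) : (Fin.cons (c m) (update c m b) : Fin (k + 1) → ι) =
      (Fin.cons b c : Fin (k + 1) → ι) ∘ Equiv.swap 0 m.succ := by
    ext x
    cases x using Fin.cases with
    | zero => simp
    | succ x =>
      by_cases hx : x = m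
      · subst hx
        simp
      · simp [hx, Equiv.swap_apply_of_ne_of_ne (Fin.succ_ne_zero x)
          (Fin.succ_injective _ |>.ne hx)]
  simp only [matrixUnitAct]
  rw [Finset.sum_comm]
  simp only [Finset.sum_ite_eq, Finset.mem_univ, if_true, hswap, hv _ _ _ (Fin.succ_ne_zero _).symm,
    Finset.sum_const, Finset.card_univ, Fintype.card_fin, nsmul_eq_mul]
  ring

lemma sum_sum_glVrepE_mul (u : K) (a s : ι) (F : ι → ι → K) :
    ∑ t, ∑ x, glVrepE u a x s t * F x t = F a s - u⁻¹ * (if s = a then ∑ x, F x x else 0) := by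
  simp only [glVrepE, ite_and, mul_ite, mul_one, mul_zero, sub_mul, ite_mul, one_mul, zero_mul,
    sum_sub_distrib, sum_ite_eq, mem_univ, ↓reduceIte, sum_ite_irrel, sum_const_zero, mul_sum]

/-- The `Y(gl_N)` counterpart of `TopMat`. -/
def glTopMat (k : ℕ) (u : K) (i j : ι) : Matrix (Fin k → ι) (Fin k → ι) K := fun c d =>
  ∑ a : Fin (k + 1) → ι,
    if a 0 = i ∧ a (Fin.last k) = j then
      ∏ p : Fin k, glVrepE (u - ((p : ℕ) : K)) (a p.castSucc) (a p.succ) (c p) (d p)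
    else 0

lemma glTopMat_zero (u : K) (i j : ι) (c d : Fin 0 → ι) :
    glTopMat 0 u i j c d = if i = j then 1 else 0 := by
  simp only [glTopMat, Fin.prod_univ_zero, Fin.last_zero]
  rw [← Equiv.sum_comp (Equiv.funUnique (Fin 1) ι).symm]
  simp [ite_and]

lemma glTopMat_succ (u : K) (i j : ι) (c d : Fin (k + 1) → ι) :
    glTopMat (k + 1) u i j c d =
      ∑ x, glVrepE u i x (c 0) (d 0) * glTopMat k (u - 1) x j (Fin.tail c) (Fin.tail d) := by
  unfold glTopMat
  rw [← Equiv.sum_comp (Fin.consEquiv fun _ : Fin (k + 2) => ι) (M := K), Fintype.sum_prod_type,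
    Finset.sum_comm]
  simp only [Fin.consEquiv_apply, Fin.prod_univ_succ, ite_and, Finset.sum_ite_eq', Finset.mem_univ,
    if_true, ← Fin.succ_last, Fin.cons_succ, Fin.castSucc_zero, Fin.cons_zero,
    ← Fin.succ_castSucc, Fin.val_zero, Fin.val_succ, Nat.cast_zero, sub_zero, Nat.cast_succ,
    Finset.mul_sum, mul_ite, mul_zero]
  rw [Finset.sum_comm]
  simp only [Finset.sum_ite_eq, Finset.mem_univ, if_true, Fin.tail, sub_add_eq_sub_sub_swap]

lemma glTopMat_mulVec_cons (u : K) (a b : ι) (v : (Fin (k + 1) → ι) → K) (s : ι)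
    (c : Fin k → ι) :
    (glTopMat (k + 1) u a b *ᵥ v) (Fin.cons s c) =
      ∑ t, ∑ x, glVrepE u a x s t * (glTopMat k (u - 1) x b *ᵥ fun d => v (Fin.cons t d)) c := by
  simp only [Matrix.mulVec, dotProduct, glTopMat_succ, Fin.cons_zero, Fin.tail_cons]
  rw [← Equiv.sum_comp (Fin.consEquiv fun _ : Fin (k + 1) => ι) (M := K), Fintype.sum_prod_type]
  simp only [Fin.consEquiv, Equiv.coe_fn_mk, Fin.cons_zero, Fin.tail_cons, Finset.sum_mul,
    Finset.mul_sum, mul_assoc]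
  exact Finset.sum_congr rfl fun t _ => Finset.sum_comm

theorem glTopMat_mulVec_of_isAntisymm (u : K) (hu : ∀ p : ℕ, p < k → u - p ≠ 0)
    (a b : ι) {v : (Fin k → ι) → K} (hv : IsAntisymm v) :
    glTopMat k u a b *ᵥ v = (if a = b then v else 0) - (u - k + 1)⁻¹ • matrixUnitAct a b v := by
  induction k generalizing u a with
  | zero =>
    ext c
    have hv0 (d : Fin 0 → ι) : v d = v c := congrArg v (Subsingleton.elim d c)
    simp [Matrix.mulVec, dotProduct, glTopMat_zero, matrixUnitAct, hv0, ite_apply]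
  | succ k ih =>
    ext c
    cases c using Fin.consCases with
    | cons s c =>
    have hu' : ∀ p : ℕ, p < k → u - 1 - p ≠ 0 := fun p hp => by
      simpa [sub_sub, add_comm] using hu (p + 1) (by omega)
    have hu0 : u ≠ 0 := by simpa using hu 0 (by omega)
    have huk : u - k ≠ 0 := hu k (by omega)
    have hshift : u - 1 - k + 1 = u - k := by ring
    have hshift' : u - ((k + 1 : ℕ) : K) + 1 = u - k := by push_cast; ring
    simp only [glTopMat_mulVec_cons, ih (u - 1) hu' _ (hv.cons _), sum_sum_glVrepE_mul, hshift,
      hshift', Pi.sub_apply, Pi.smul_apply, smul_eq_mul, ite_apply, Pi.zero_apply,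
      matrixUnitAct_cons, Finset.sum_sub_distrib]
    rw [← Finset.mul_sum, hv.sum_matrixUnitAct_cons]
    simp only [Finset.sum_ite_eq', Finset.mem_univ, if_true]
    split_ifs <;> field_simp <;> ring

end FusedOperator

lemma IsAntisymm.matrixUnitAct {v : (Fin k → ι) → K} (hv : IsAntisymm v) (a b : ι) :
    IsAntisymm (matrixUnitAct a b v) := by
  intro c p q hpq
  have hupd (m : Fin k) : update (c ∘ Equiv.swap p q) m b =
      update c (Equiv.swap p q m) b ∘ Equiv.swap p q := by
    rw [update_comp_equiv, Equiv.symm_swap, Equiv.swap_apply_self]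
  simp only [OspYangian.matrixUnitAct, comp_apply, hupd, hv _ _ _ hpq, ← Finset.sum_neg_distrib]
  exact Fintype.sum_equiv (Equiv.swap p q) _ _ fun m => by rw [apply_ite Neg.neg, neg_zero]

end Fusion

section VectorRepresentation

variable {n k : ℕ}

lemma pb_eq_one {x : Fin (NN n)} (hx : (x : ℕ) < n) : pb x = 1 := if_neg hx.ne

lemma vrepE_eq_glVrepE (w : ℂ) {a b c d : Fin (NN n)} (ha : (a : ℕ) < n) (hd : (d : ℕ) < n) :
    vrepE n w a b c d = glVrepE w a b c d := by
  have hQ : ¬(c = pr b ∧ d = pr a) := fun h => by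
    have := congrArg Fin.val h.2
    simp only [pr, idx] at this
    omega
  simp only [vrepE, glVrepE, pb_eq_one ha, sg, pow_one, if_neg hQ]
  ring

lemma kosz_eq_one {a : Fin (k + 1) → Fin (NN n)} (ha : ∀ q, (a q : ℕ) < n)
    (d : Fin k → Fin (NN n)) : kosz n k a d = 1 := by
  simp only [kosz, pb_eq_one (ha _), sg, ← two_mul, ← Finset.mul_sum, pow_mul]
  norm_num

lemma TopMat_apply_eq_glTopMat {u : ℂ} {i : Fin (NN n)} (hi : (i : ℕ) < n) (j : Fin (NN n))
    (c : Fin k → Fin (NN n)) {d : Fin k → Fin (NN n)} (hd : ∀ p, (d p : ℕ) < n) :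
    TopMat n k u i j c d = glTopMat k u i j c d := by
  refine Finset.sum_congr rfl fun a _ => ?_
  split_ifs with ha
  swap
  · rfl
  rcases Fin.forall_or_exists_castSucc_and_not_succ (P := fun q => (a q : ℕ) < n)
    (ha.1 ▸ hi) with hlow | ⟨p, hp, hpn⟩
  · rw [kosz_eq_one hlow, one_mul]
    exact Finset.prod_congr rfl fun p _ => vrepE_eq_glVrepE _ (hlow _) (hd p)
  · have hzero : glVrepE (u - ((p : ℕ) : ℂ)) (a p.castSucc) (a p.succ) (c p) (d p) = 0 :=
      glVrepE_eq_zero _ (fun h => hpn (h ▸ hp)) (fun h => hpn (h ▸ hd p))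
    rw [Finset.prod_eq_zero (Finset.mem_univ p) (by rw [vrepE_eq_glVrepE _ hp (hd p), hzero]),
      Finset.prod_eq_zero (Finset.mem_univ p) hzero, mul_zero]

lemma exists_perm_of_xiVec_ne_zero {hk : k ≤ NN n} {c : Fin k → Fin (NN n)}
    (h : xiVec n k hk c ≠ 0) : ∃ σ : Equiv.Perm (Fin k), c = fun p => Fin.castLE hk (σ p) := by
  by_contra hc
  exact h (Finset.sum_eq_zero fun σ _ => by rw [if_neg fun h' => hc ⟨σ, h'⟩, mul_zero])

lemma xiVec_isAntisymm (hk : k ≤ NN n) : IsAntisymm (xiVec n k hk) := by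
  intro c p q hpq
  simp only [xiVec, ← Finset.sum_neg_distrib]
  refine Fintype.sum_equiv (Equiv.mulRight (Equiv.swap p q)) _ _ fun σ => ?_
  have hcomp : (c ∘ Equiv.swap p q = fun x => Fin.castLE hk (σ x)) ↔
      c = fun x => Fin.castLE hk ((σ * Equiv.swap p q) x) := by
    constructor
    · intro h
      funext x
      simpa using congrFun h (Equiv.swap p q x)
    · rintro rfl
      funext x
      simp
  rw [Equiv.coe_mulRight, Equiv.Perm.sign_mul, Equiv.Perm.sign_swap hpq]
  simp only [hcomp]
  push_cast
  ring

lemma matrixUnitAct_xiVec {hk : k ≤ NN n} {i j : Fin (NN n)} (hij : i < j) :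
    matrixUnitAct i j (xiVec n k hk) = 0 := by
  ext c
  by_cases hc : Injective c
  swap
  · exact ((xiVec_isAntisymm hk).matrixUnitAct i j).eq_zero_of_not_injective hc
  refine Finset.sum_eq_zero fun m _ => ?_
  split_ifs with hcm
  swap
  · rfl
  by_contra hne
  obtain ⟨σ, hσ⟩ := exists_perm_of_xiVec_ne_zero hne
  have hik : (i : ℕ) < k := by
    have hjm := congrArg Fin.val (congrFun hσ m)
    simp only [update_self, Fin.val_castLE] at hjm
    have hσm := (σ m).isLt
    have hij' : (i : ℕ) < j := hij
    omega
  -- `e_i` occurs in `update c m j` at the position `m'`, so `c` takes the value `i` at `m` and `m'`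
  set m' := σ⁻¹ ⟨i, hik⟩
  have hm' : update c m j m' = i := by
    rw [congrFun hσ m']
    ext
    simp [m']
  by_cases hmm : m' = m
  · rw [hmm, update_self] at hm'
    exact hij.ne' hm'
  · rw [update_of_ne hmm] at hm'
    exact hmm (hc (hm'.trans hcm.symm))

lemma TopMat_mulVec_xiVec (hkn : k ≤ n) (u : ℂ) {i : Fin (NN n)} (hi : (i : ℕ) < n)
    (j : Fin (NN n)) :
    TopMat n k u i j *ᵥ xiVec n k (le_NN hkn) = glTopMat k u i j *ᵥ xiVec n k (le_NN hkn) := by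
  ext c
  refine Finset.sum_congr rfl fun d _ => ?_
  by_cases hd : xiVec n k (le_NN hkn) d = 0
  · simp only [hd, mul_zero]
  obtain ⟨σ, rfl⟩ := exists_perm_of_xiVec_ne_zero hd
  dsimp only
  rw [TopMat_apply_eq_glTopMat hi j c fun p => (σ p).isLt.trans_le hkn]

end VectorRepresentation

theorem xi_annihilated_general
    (n k : ℕ) (hkn : k ≤ n) (u : ℂ)
    (hu : ∀ p : ℕ, p < k → u - (p : ℂ) ≠ 0 ∧ u - (p : ℂ) + kappa n ≠ 0)
    (i j : Fin (NN n)) (hij : i < j) (hj : (j : ℕ) ≤ n) :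
    Matrix.mulVec (TopMat n k u i j) (xiVec n k (le_NN hkn)) = 0 := by
  have hi : (i : ℕ) < n := lt_of_lt_of_le hij hj
  rw [TopMat_mulVec_xiVec hkn u hi j,
    glTopMat_mulVec_of_isAntisymm u (fun p hp => (hu p hp).1) i j (xiVec_isAntisymm _),
    if_neg hij.ne, matrixUnitAct_xiVec hij, smul_zero, sub_zero]

/-- For `1 ≤ k ≤ n`, the antisymmetric vector
`ξ_k = Σ_{σ ∈ S_k} sgn(σ) e_{σ(1)} ⊗ ⋯ ⊗ e_{σ(k)}` in `(ℂ^{1|2n})^{⊗k}` satisfies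
`T_{ij}(u) ξ_k = 0` for all `1 ≤ i < j ≤ n+1` (stated for all `u` away from the poles of the
matrix entries). -/
theorem xi_annihilated
    (n k : ℕ) (hk1 : 1 ≤ k) (hkn : k ≤ n) (u : ℂ)
    (hu : ∀ p : ℕ, p < k → u - (p : ℂ) ≠ 0 ∧ u - (p : ℂ) + kappa n ≠ 0)
    (i j : Fin (NN n)) (hij : i < j) (hj : (j : ℕ) ≤ n) :
    Matrix.mulVec (TopMat n k u i j) (xiVec n k (le_NN hkn)) = 0 :=
  xi_annihilated_general n k hkn u hu i j hij hj

end OspYangian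
end
end
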